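/- Variable freedom is preserved by formula equivalence: for all formulas α, α' and every variable z, if α ≈ α' and z NotFreeIn α, then z NotFreeIn α'. -/

import Mathlib

/-- Variables, indexed by natural numbers. -/
structure FOVar where
  idx : ℕ
deriving DecidableEq

/-- Function symbols: an index and an arity. -/
structure FOFunc where
  idx : ℕ
  arity : ℕ
deriving DecidableEq

/-- Relation symbols: an index and an arity. -/
structure FORel where
  idx : ℕ
  arity : ℕ
deriving DecidableEq

/-- Length-indexed vectors. -/
inductive Vec (A : Type) : ℕ → Type where
  | nil : Vec A 0
  | cons : ∀ {n}, A → Vec A n → Vec A (n + 1)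

/-- A predicate holds on every element of a vector. -/
inductive Vec.All {A : Type} (P : A → Prop) : ∀ {n}, Vec A n → Prop where
  | nil : Vec.All P Vec.nil
  | cons : ∀ {n x} {xs : Vec A n}, P x → Vec.All P xs → Vec.All P (Vec.cons x xs)

/-- First-order terms. -/
inductive Term : Type where
  | varterm : FOVar → Term
  | functerm : (f : FOFunc) → Vec Term f.arity → Term

/-- First-order formulas. -/
inductive Formula : Type where
  | atom : (r : FORel) → Vec Term r.arity → Formula
  | imp : Formula → Formula → Formula
  | and : Formula → Formula → Formula
  | or : Formula → Formula → Formula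
  | all : FOVar → Formula → Formula
  | ex : FOVar → Formula → Formula

/-- The variable x does not occur in a term. -/
inductive NotInTerm (x : FOVar) : Term → Prop where
  | varterm : ∀ {y}, x ≠ y → NotInTerm x (Term.varterm y)
  | functerm : ∀ {f} {us : Vec Term f.arity},
      Vec.All (NotInTerm x) us → NotInTerm x (Term.functerm f us)

/-- The variable x does not occur in any term of a vector. -/
def NotInTerms {n : ℕ} (x : FOVar) (ts : Vec Term n) : Prop :=
  Vec.All (NotInTerm x) ts

/-- The variable x is not free in a formula. -/
inductive NotFreeIn : FOVar → Formula → Prop where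
  | atom : ∀ {x r} {ts : Vec Term r.arity},
      NotInTerms x ts → NotFreeIn x (Formula.atom r ts)
  | imp : ∀ {x α β}, NotFreeIn x α → NotFreeIn x β → NotFreeIn x (Formula.imp α β)
  | and : ∀ {x α β}, NotFreeIn x α → NotFreeIn x β → NotFreeIn x (Formula.and α β)
  | or : ∀ {x α β}, NotFreeIn x α → NotFreeIn x β → NotFreeIn x (Formula.or α β)
  | all_self : ∀ x α, NotFreeIn x (Formula.all x α)
  | ex_self : ∀ x α, NotFreeIn x (Formula.ex x α)
  | all : ∀ {x α} (y : FOVar), NotFreeIn x α → NotFreeIn x (Formula.all y α)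
  | ex : ∀ {x α} (y : FOVar), NotFreeIn x α → NotFreeIn x (Formula.ex y α)

mutual
/-- ⟨u⟩[x/t]≡v : substituting t for x in the term u yields v. -/
inductive TermSub : Term → FOVar → Term → Term → Prop where
  | var_eq : ∀ {x t}, TermSub (Term.varterm x) x t t
  | var_ne : ∀ {x t y}, x ≠ y → TermSub (Term.varterm y) x t (Term.varterm y)
  | functerm : ∀ {x t f} {us vs : Vec Term f.arity},
      TermsSub us x t vs → TermSub (Term.functerm f us) x t (Term.functerm f vs)

/-- [us][x/t]≡vs : componentwise substitution in vectors of terms. -/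
inductive TermsSub : ∀ {n}, Vec Term n → FOVar → Term → Vec Term n → Prop where
  | nil : ∀ {x t}, TermsSub Vec.nil x t Vec.nil
  | cons : ∀ {x t u v n} {us vs : Vec Term n},
      TermSub u x t v → TermsSub us x t vs →
      TermsSub (Vec.cons u us) x t (Vec.cons v vs)
end

/-- α[x/t]≡β : substituting t for all free occurrences of x in α yields β. -/
inductive FormulaSub : Formula → FOVar → Term → Formula → Prop where
  | ident : ∀ α x, FormulaSub α x (Term.varterm x) α
  | notfree : ∀ {α x t}, NotFreeIn x α → FormulaSub α x t α
  | atom : ∀ {x t} (r : FORel) {us vs : Vec Term r.arity},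
      TermsSub us x t vs → FormulaSub (Formula.atom r us) x t (Formula.atom r vs)
  | imp : ∀ {α α' β β' x t}, FormulaSub α x t α' → FormulaSub β x t β' →
      FormulaSub (Formula.imp α β) x t (Formula.imp α' β')
  | and : ∀ {α α' β β' x t}, FormulaSub α x t α' → FormulaSub β x t β' →
      FormulaSub (Formula.and α β) x t (Formula.and α' β')
  | or : ∀ {α α' β β' x t}, FormulaSub α x t α' → FormulaSub β x t β' →
      FormulaSub (Formula.or α β) x t (Formula.or α' β')
  | all_self : ∀ {t} x α, FormulaSub (Formula.all x α) x t (Formula.all x α)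
  | ex_self : ∀ {t} x α, FormulaSub (Formula.ex x α) x t (Formula.ex x α)
  | all : ∀ {α β x y t}, x ≠ y → NotInTerm y t → FormulaSub α x t β →
      FormulaSub (Formula.all y α) x t (Formula.all y β)
  | ex : ∀ {α β x y t}, x ≠ y → NotInTerm y t → FormulaSub α x t β →
      FormulaSub (Formula.ex y α) x t (Formula.ex y β)

/-- The term t is free for the variable x in a formula. -/
inductive FreeFor (t : Term) (x : FOVar) : Formula → Prop where
  | notfree : ∀ {α}, NotFreeIn x α → FreeFor t x α
  | atom : ∀ r us, FreeFor t x (Formula.atom r us)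
  | imp : ∀ {α β}, FreeFor t x α → FreeFor t x β → FreeFor t x (Formula.imp α β)
  | and : ∀ {α β}, FreeFor t x α → FreeFor t x β → FreeFor t x (Formula.and α β)
  | or : ∀ {α β}, FreeFor t x α → FreeFor t x β → FreeFor t x (Formula.or α β)
  | all_self : ∀ α, FreeFor t x (Formula.all x α)
  | ex_self : ∀ α, FreeFor t x (Formula.ex x α)
  | all : ∀ {α y}, NotInTerm y t → FreeFor t x α → FreeFor t x (Formula.all y α)
  | ex : ∀ {α y}, NotInTerm y t → FreeFor t x α → FreeFor t x (Formula.ex y α)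

/-- The variable x appears nowhere (free or bound) in a formula. -/
inductive FreshIn (x : FOVar) : Formula → Prop where
  | atom : ∀ {r} {ts : Vec Term r.arity}, NotInTerms x ts → FreshIn x (Formula.atom r ts)
  | imp : ∀ {α β}, FreshIn x α → FreshIn x β → FreshIn x (Formula.imp α β)
  | and : ∀ {α β}, FreshIn x α → FreshIn x β → FreshIn x (Formula.and α β)
  | or : ∀ {α β}, FreshIn x α → FreshIn x β → FreshIn x (Formula.or α β)
  | all : ∀ {α y}, y ≠ x → FreshIn x α → FreshIn x (Formula.all y α)
  | ex : ∀ {α y}, y ≠ x → FreshIn x α → FreshIn x (Formula.ex y α)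

/-- Formula equivalence: equality up to renaming of bound variables. -/
inductive FormulaEquiv : Formula → Formula → Prop where
  | atom : ∀ r ts, FormulaEquiv (Formula.atom r ts) (Formula.atom r ts)
  | imp : ∀ {α β α' β'}, FormulaEquiv α α' → FormulaEquiv β β' →
      FormulaEquiv (Formula.imp α β) (Formula.imp α' β')
  | and : ∀ {α β α' β'}, FormulaEquiv α α' → FormulaEquiv β β' →
      FormulaEquiv (Formula.and α β) (Formula.and α' β')
  | or : ∀ {α β α' β'}, FormulaEquiv α α' → FormulaEquiv β β' →
      FormulaEquiv (Formula.or α β) (Formula.or α' β')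
  | all : ∀ {α α'} (x : FOVar), FormulaEquiv α α' → FormulaEquiv (Formula.all x α) (Formula.all x α')
  | ex : ∀ {α α'} (x : FOVar), FormulaEquiv α α' → FormulaEquiv (Formula.ex x α) (Formula.ex x α')
  | all_rename : ∀ {α β β' x y}, NotFreeIn y α →
      FormulaSub α x (Term.varterm y) β → FormulaEquiv β β' →
      FormulaEquiv (Formula.all x α) (Formula.all y β')
  | ex_rename : ∀ {α β β' x y}, NotFreeIn y α →
      FormulaSub α x (Term.varterm y) β → FormulaEquiv β β' →
      FormulaEquiv (Formula.ex x α) (Formula.ex y β')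
  | all_rename' : ∀ {α α' β' x y}, FormulaEquiv α α' → NotFreeIn y α' →
      FormulaSub α' x (Term.varterm y) β' →
      FormulaEquiv (Formula.all x α) (Formula.all y β')
  | ex_rename' : ∀ {α α' β' x y}, FormulaEquiv α α' → NotFreeIn y α' →
      FormulaSub α' x (Term.varterm y) β' →
      FormulaEquiv (Formula.ex x α) (Formula.ex y β')

/-- Natural deduction for minimal first-order logic. -/
inductive Deduction : Set Formula → Formula → Prop where
  | assume : ∀ (α : Formula), Deduction {α} α
  | close : ∀ {Γ Δ : Set Formula} {α}, Γ ⊆ Δ → Deduction Γ α → Deduction Δ α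
  | arrowintro : ∀ {Γ β} (α : Formula), Deduction Γ β →
      Deduction (Γ \ {α}) (Formula.imp α β)
  | arrowelim : ∀ {Γ₁ Γ₂ α β}, Deduction Γ₁ (Formula.imp α β) → Deduction Γ₂ α →
      Deduction (Γ₁ ∪ Γ₂) β
  | conjintro : ∀ {Γ₁ Γ₂ α β}, Deduction Γ₁ α → Deduction Γ₂ β →
      Deduction (Γ₁ ∪ Γ₂) (Formula.and α β)
  | conjelim : ∀ {Γ₁ Γ₂ α β γ}, Deduction Γ₁ (Formula.and α β) → Deduction Γ₂ γ →
      Deduction (Γ₁ ∪ (Γ₂ \ {α, β})) γ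
  | disjintro1 : ∀ {Γ α} (β : Formula), Deduction Γ α → Deduction Γ (Formula.or α β)
  | disjintro2 : ∀ {Γ β} (α : Formula), Deduction Γ β → Deduction Γ (Formula.or α β)
  | disjelim : ∀ {Γ₁ Γ₂ Γ₃ α β γ}, Deduction Γ₁ (Formula.or α β) →
      Deduction Γ₂ γ → Deduction Γ₃ γ →
      Deduction (Γ₁ ∪ (Γ₂ \ {α}) ∪ (Γ₃ \ {β})) γ
  | univintro : ∀ {Γ α} (x : FOVar), (∀ γ ∈ Γ, NotFreeIn x γ) →
      Deduction Γ α → Deduction Γ (Formula.all x α)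
  | univelim : ∀ {Γ α x β} (t : Term), FormulaSub α x t β →
      Deduction Γ (Formula.all x α) → Deduction Γ β
  | existintro : ∀ {Γ α β} (t : Term) (x : FOVar), FormulaSub α x t β →
      Deduction Γ β → Deduction Γ (Formula.ex x α)
  | existelim : ∀ {Γ₁ Γ₂ α β x}, NotFreeIn x β → (∀ γ ∈ Γ₂ \ {α}, NotFreeIn x γ) →
      Deduction Γ₁ (Formula.ex x α) → Deduction Γ₂ β →
      Deduction (Γ₁ ∪ (Γ₂ \ {α})) β

/-- ⊥: the atom of a fixed nullary relation symbol. -/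
def Formula.bot : Formula := Formula.atom ⟨0, 0⟩ Vec.nil

/-- ¬α is α ⇒ ⊥. -/
def Formula.neg (α : Formula) : Formula := Formula.imp α Formula.bot

/-! Induction on `α ≈ α'`. In a renaming step `Λ x α ≈ Λ y β'` either `z = y` is bound on the
right, or `z ≠ y`, and then substituting `y` for `x` cannot create a free `z`: a `z` not free in
`α` stays not free, and if `z = x` the substitution removes every free occurrence of it. -/

mutual
theorem TermSub.notInTerm {u x t v z} (h : TermSub u x t v)
    (hu : NotInTerm z u) (ht : NotInTerm z t) : NotInTerm z v :=
  match h, hu with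
  | .var_eq, _ => ht
  | .var_ne _, hu => hu
  | .functerm hs, .functerm hus => .functerm (hs.notInTerms hus ht)

theorem TermsSub.notInTerms {n} {us vs : Vec Term n} {x t z} (h : TermsSub us x t vs)
    (hus : NotInTerms z us) (ht : NotInTerm z t) : NotInTerms z vs :=
  match h, hus with
  | .nil, _ => .nil
  | .cons hu hs, .cons hu' hus => .cons (hu.notInTerm hu' ht) (hs.notInTerms hus ht)
end

mutual
theorem TermSub.notInTerm_self {u x t v} (h : TermSub u x t v)
    (ht : NotInTerm x t) : NotInTerm x v :=
  match h with
  | .var_eq => ht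
  | .var_ne hne => .varterm hne
  | .functerm hs => .functerm (hs.notInTerms_self ht)

theorem TermsSub.notInTerms_self {n} {us vs : Vec Term n} {x t} (h : TermsSub us x t vs)
    (ht : NotInTerm x t) : NotInTerms x vs :=
  match h with
  | .nil => .nil
  | .cons hu hs => .cons (hu.notInTerm_self ht) (hs.notInTerms_self ht)
end

theorem notFreeIn_all_iff {x z : FOVar} {α : Formula} :
    NotFreeIn z (.all x α) ↔ z = x ∨ NotFreeIn z α := by
  constructor
  · intro h
    cases h with
    | all_self => exact .inl rfl
    | all _ h => exact .inr h
  · rintro (rfl | h)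
    exacts [.all_self _ _, .all _ h]

theorem notFreeIn_ex_iff {x z : FOVar} {α : Formula} :
    NotFreeIn z (.ex x α) ↔ z = x ∨ NotFreeIn z α := by
  constructor
  · intro h
    cases h with
    | ex_self => exact .inl rfl
    | ex _ h => exact .inr h
  · rintro (rfl | h)
    exacts [.ex_self _ _, .ex _ h]

theorem FormulaSub.notFreeIn {α β : Formula} {x z : FOVar} {t : Term}
    (h : FormulaSub α x t β) (hα : NotFreeIn z α) (ht : NotInTerm z t) :
    NotFreeIn z β := by
  induction h with
  | ident | notfree | all_self | ex_self => exact hα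
  | atom r hs => cases hα with | atom hts => exact .atom (hs.notInTerms hts ht)
  | imp _ _ ih₁ ih₂ => cases hα with | imp h₁ h₂ => exact .imp (ih₁ h₁ ht) (ih₂ h₂ ht)
  | and _ _ ih₁ ih₂ => cases hα with | and h₁ h₂ => exact .and (ih₁ h₁ ht) (ih₂ h₂ ht)
  | or _ _ ih₁ ih₂ => cases hα with | or h₁ h₂ => exact .or (ih₁ h₁ ht) (ih₂ h₂ ht)
  | all _ _ _ ih => exact notFreeIn_all_iff.2 ((notFreeIn_all_iff.1 hα).imp_right (ih · ht))
  | ex _ _ _ ih => exact notFreeIn_ex_iff.2 ((notFreeIn_ex_iff.1 hα).imp_right (ih · ht))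

theorem FormulaSub.notFreeIn_self {α β : Formula} {x : FOVar} {t : Term}
    (h : FormulaSub α x t β) (ht : NotInTerm x t) : NotFreeIn x β := by
  induction h with
  | ident => cases ht with | varterm hne => exact absurd rfl hne
  | notfree hnf => exact hnf
  | atom r hs => exact .atom (hs.notInTerms_self ht)
  | imp _ _ ih₁ ih₂ => exact .imp (ih₁ ht) (ih₂ ht)
  | and _ _ ih₁ ih₂ => exact .and (ih₁ ht) (ih₂ ht)
  | or _ _ ih₁ ih₂ => exact .or (ih₁ ht) (ih₂ ht)
  | all_self => exact .all_self _ _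
  | ex_self => exact .ex_self _ _
  | all _ _ _ ih => exact .all _ (ih ht)
  | ex _ _ _ ih => exact .ex _ (ih ht)

theorem FormulaSub.eq_or_notFreeIn_of_rename {α β : Formula} {x y z : FOVar}
    (h : FormulaSub α x (.varterm y) β) (hz : z = x ∨ NotFreeIn z α) :
    z = y ∨ NotFreeIn z β := by
  by_cases hzy : z = y
  · exact .inl hzy
  · have hy : NotInTerm z (.varterm y) := .varterm hzy
    rcases hz with rfl | hz
    exacts [.inr (h.notFreeIn_self hy), .inr (h.notFreeIn hz hy)]

/-- Variable freedom is preserved by formula equivalence. -/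
theorem formulaEquiv_notFree {α α' : Formula} {z : FOVar}
    (h : FormulaEquiv α α') (hz : NotFreeIn z α) : NotFreeIn z α' := by
  induction h with
  | atom => exact hz
  | imp _ _ ih₁ ih₂ => cases hz with | imp h₁ h₂ => exact .imp (ih₁ h₁) (ih₂ h₂)
  | and _ _ ih₁ ih₂ => cases hz with | and h₁ h₂ => exact .and (ih₁ h₁) (ih₂ h₂)
  | or _ _ ih₁ ih₂ => cases hz with | or h₁ h₂ => exact .or (ih₁ h₁) (ih₂ h₂)
  | all _ _ ih => exact notFreeIn_all_iff.2 ((notFreeIn_all_iff.1 hz).imp_right ih)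
  | ex _ _ ih => exact notFreeIn_ex_iff.2 ((notFreeIn_ex_iff.1 hz).imp_right ih)
  | all_rename _ hsub _ ih =>
      exact notFreeIn_all_iff.2
        ((hsub.eq_or_notFreeIn_of_rename (notFreeIn_all_iff.1 hz)).imp_right ih)
  | ex_rename _ hsub _ ih =>
      exact notFreeIn_ex_iff.2
        ((hsub.eq_or_notFreeIn_of_rename (notFreeIn_ex_iff.1 hz)).imp_right ih)
  | all_rename' _ _ hsub ih =>
      exact notFreeIn_all_iff.2
        (hsub.eq_or_notFreeIn_of_rename ((notFreeIn_all_iff.1 hz).imp_right ih))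
  | ex_rename' _ _ hsub ih =>
      exact notFreeIn_ex_iff.2
        (hsub.eq_or_notFreeIn_of_rename ((notFreeIn_ex_iff.1 hz).imp_right ih))
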